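/- Let k be a field and H a k-Hopf algebra with comultiplication Δ(h) = Σ h₍₁₎⊗h₍₂₎ and antipode S. Then the k-linear map R' : H⊗H → H⊗H defined by R'(g⊗h) = Σ g₍₁₎ ⊗ S(g₍₂₎)h is a solution of the Hopf equation (R'¹²R'²³ = R'²³R'¹³R'¹²). -/

import Mathlib

open TensorProduct LinearMap

section HopfEq

variable (k V : Type*) [Field k] [AddCommGroup V] [Module k V]

/-- The flip map `τ : V ⊗ V → V ⊗ V`, `τ(v ⊗ w) = w ⊗ v`. -/
noncomputable def flipMap : V ⊗[k] V →ₗ[k] V ⊗[k] V :=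
  (TensorProduct.comm k V V).toLinearMap

variable {k V}

/-- `R¹² = R ⊗ I` as an endomorphism of `V ⊗ V ⊗ V`. -/
noncomputable def map12 (R : V ⊗[k] V →ₗ[k] V ⊗[k] V) :
    V ⊗[k] (V ⊗[k] V) →ₗ[k] V ⊗[k] (V ⊗[k] V) :=
  (TensorProduct.assoc k V V V).toLinearMap ∘ₗ R.rTensor V ∘ₗ
    (TensorProduct.assoc k V V V).symm.toLinearMap

/-- `R²³ = I ⊗ R` as an endomorphism of `V ⊗ V ⊗ V`. -/
noncomputable def map23 (R : V ⊗[k] V →ₗ[k] V ⊗[k] V) :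
    V ⊗[k] (V ⊗[k] V) →ₗ[k] V ⊗[k] (V ⊗[k] V) :=
  R.lTensor V

/-- `R¹³ = (I ⊗ τ)(R ⊗ I)(I ⊗ τ)` as an endomorphism of `V ⊗ V ⊗ V`. -/
noncomputable def map13 (R : V ⊗[k] V →ₗ[k] V ⊗[k] V) :
    V ⊗[k] (V ⊗[k] V) →ₗ[k] V ⊗[k] (V ⊗[k] V) :=
  (flipMap k V).lTensor V ∘ₗ map12 R ∘ₗ (flipMap k V).lTensor V

/-- `R` is a solution of the Hopf equation: `R¹²R²³ = R²³R¹³R¹²`. -/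
def IsHopfSolution (R : V ⊗[k] V →ₗ[k] V ⊗[k] V) : Prop :=
  map12 R ∘ₗ map23 R = map23 R ∘ₗ map13 R ∘ₗ map12 R

/-- `R` is a solution of the pentagonal equation: `R¹²R¹³R²³ = R²³R¹²`. -/
def IsPentagonSolution (R : V ⊗[k] V →ₗ[k] V ⊗[k] V) : Prop :=
  map12 R ∘ₗ map13 R ∘ₗ map23 R = map23 R ∘ₗ map12 R

end HopfEq

variable (k H : Type*) [Field k] [Ring H] [HopfAlgebra k H]

/-- The map `R' : H ⊗ H → H ⊗ H`, `R'(g ⊗ h) = Σ g₍₁₎ ⊗ S(g₍₂₎)h`. -/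
noncomputable def antipodeMap : H ⊗[k] H →ₗ[k] H ⊗[k] H :=
  LinearMap.lTensor H
      (LinearMap.mul' k H ∘ₗ LinearMap.rTensor H (HopfAlgebra.antipode (R := k))) ∘ₗ
    (TensorProduct.assoc k H H H).toLinearMap ∘ₗ
    LinearMap.rTensor H (Coalgebra.comul (R := k))

/-!
The operator `W = comulAct (mul)`, `W (g ⊗ h) = ∑ g₍₁₎ ⊗ g₍₂₎ h`, satisfies the pentagon equation
`W¹² W¹³ W²³ = W²³ W¹²`, because `Δ` is coassociative and multiplicative. The assignment
`T ↦ (c ⊗ m ↦ ∑ c₍₁₎ ⊗ T c₍₂₎ m)` sends convolution products to composites, and left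
multiplication `H → End H` is an algebra map, whose convolution inverse is its composite with
`S`; so `R' = W⁻¹`. Inverting both sides of the pentagon equation for `W` gives the Hopf
equation for `W⁻¹`.
-/

section LegMaps

variable {K V : Type*} [Field K] [AddCommGroup V] [Module K V]

noncomputable def map12Hom : Module.End K (V ⊗[K] V) →* Module.End K (V ⊗[K] (V ⊗[K] V)) where
  toFun := map12
  map_one' := by ext; simp [map12]
  map_mul' f g := by ext; simp [map12]

noncomputable def map23Hom : Module.End K (V ⊗[K] V) →* Module.End K (V ⊗[K] (V ⊗[K] V)) where
  toFun := map23
  map_one' := lTensor_id V _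
  map_mul' := lTensor_mul V

@[simp]
lemma flipMap_lTensor_flipMap (x : V ⊗[K] (V ⊗[K] V)) :
    (flipMap K V).lTensor V ((flipMap K V).lTensor V x) = x := by
  rw [← LinearMap.comp_apply, ← lTensor_comp]
  convert LinearMap.lTensor_id_apply V _ x
  ext; rfl

noncomputable def map13Hom : Module.End K (V ⊗[K] V) →* Module.End K (V ⊗[K] (V ⊗[K] V)) where
  toFun := map13
  map_one' := by ext; simp [map13, map12, flipMap]
  map_mul' f g := by
    ext
    simp [map13, show map12 (f * g) = map12 f * map12 g from map12Hom.map_mul f g]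

end LegMaps

theorem IsPentagonSolution.isHopfSolution_inv {K V : Type*} [Field K] [AddCommGroup V]
    [Module K V] {W : (Module.End K (V ⊗[K] V))ˣ}
    (hW : IsPentagonSolution (W : Module.End K (V ⊗[K] V))) :
    IsHopfSolution (↑W⁻¹ : Module.End K (V ⊗[K] V)) := by
  set a := Units.map map12Hom W
  set b := Units.map map23Hom W
  set c := Units.map map13Hom W
  have hpent : a * c * b = b * a := Units.ext hW
  have hhopf : a⁻¹ * b⁻¹ = b⁻¹ * c⁻¹ * a⁻¹ := by
    rw [← mul_inv_rev, ← hpent]; group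
  have := congrArg Units.val hhopf
  simp only [a, b, c, ← map_inv, Units.coe_map, Units.val_mul] at this
  exact this

section ComulAct

open Coalgebra WithConv

variable {R C M : Type*} [CommSemiring R] [AddCommMonoid C] [Module R C] [Coalgebra R C]
  [AddCommMonoid M] [Module R M]

noncomputable def comulAct (T : C →ₗ[R] Module.End R M) : Module.End R (C ⊗[R] M) :=
  (lift T).lTensor C ∘ₗ (TensorProduct.assoc R C C M).toLinearMap ∘ₗ (comul (R := R)).rTensor M

lemma comulAct_tmul (T : C →ₗ[R] Module.End R M) {c : C} {ι : Type*} (𝓡 : Repr R c ι) (m : M) :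
    comulAct T (c ⊗ₜ m) = ∑ i ∈ 𝓡.index, 𝓡.left i ⊗ₜ T (𝓡.right i) m := by
  simp [comulAct, ← 𝓡.eq, sum_tmul]

noncomputable def comulActHom :
    WithConv (C →ₗ[R] Module.End R M) →* Module.End R (C ⊗[R] M) where
  toFun T := comulAct T.ofConv
  map_one' := by
    ext c m
    have h𝓡 := congr((toSpanSingleton R M m).lTensor C $(sum_tmul_counit_eq (ℛ R c)))
    simp only [map_sum, lTensor_tmul, toSpanSingleton_apply, one_smul, tmul_smul] at h𝓡
    simpa [comulAct_tmul _ (ℛ R c)] using h𝓡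
  map_mul' T U := by
    ext c m
    let 𝓡 := ℛ R c
    have hcoassoc := congr((lift (T.ofConv.compl₂ (U.ofConv.flip m))).lTensor C
      $(sum_tmul_tmul_eq 𝓡 (fun i ↦ ℛ R (𝓡.left i)) (fun i ↦ ℛ R (𝓡.right i))))
    simp only [map_sum, lTensor_tmul, lift.tmul, compl₂_apply, flip_apply] at hcoassoc
    simp only [AlgebraTensorModule.curry_apply, restrictScalars_self, curry_apply,
      comulAct_tmul _ 𝓡, (ℛ R (𝓡.right _)).convMul_apply, coe_sum, Finset.sum_apply,
      Module.End.mul_apply, tmul_sum, ← hcoassoc, map_sum]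
    exact Finset.sum_congr rfl fun i _ ↦ (comulAct_tmul _ (ℛ R (𝓡.left i)) _).symm

end ComulAct

section ComulActLegs

open Coalgebra

variable {K C : Type*} [Field K] [AddCommGroup C] [Module K C] [Coalgebra K C]
  (T : C →ₗ[K] Module.End K C) {ι : Type*}

lemma map12_comulAct_tmul {a : C} (𝓡 : Repr K a ι) (b c : C) :
    map12 (comulAct T) (a ⊗ₜ (b ⊗ₜ c)) =
      ∑ i ∈ 𝓡.index, 𝓡.left i ⊗ₜ (T (𝓡.right i) b ⊗ₜ c) := by
  simp [map12, comulAct_tmul T 𝓡, sum_tmul]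

lemma map13_comulAct_tmul {a : C} (𝓡 : Repr K a ι) (b c : C) :
    map13 (comulAct T) (a ⊗ₜ (b ⊗ₜ c)) =
      ∑ i ∈ 𝓡.index, 𝓡.left i ⊗ₜ (b ⊗ₜ T (𝓡.right i) c) := by
  simp [map13, flipMap, map12_comulAct_tmul T 𝓡]

lemma map23_comulAct_tmul (a : C) {b : C} (𝓡 : Repr K b ι) (c : C) :
    map23 (comulAct T) (a ⊗ₜ (b ⊗ₜ c)) =
      ∑ i ∈ 𝓡.index, a ⊗ₜ (𝓡.left i ⊗ₜ T (𝓡.right i) c) := by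
  simp [map23, comulAct_tmul T 𝓡, tmul_sum]

end ComulActLegs

open Coalgebra in
theorem isPentagonSolution_comulAct_mul {K A : Type*} [Field K] [Ring A] [Bialgebra K A] :
    IsPentagonSolution (comulAct (LinearMap.mul K A)) := by
  ext g h l
  let 𝓡 := ℛ K g
  let 𝓢 := ℛ K h
  have hcoassoc := fun j ↦
    congr((map (mulRight K (𝓢.left j)) (mulRight K (𝓢.right j * l))).lTensor A
      $(sum_tmul_tmul_eq 𝓡 (fun i ↦ ℛ K (𝓡.left i)) (fun i ↦ ℛ K (𝓡.right i))))
  simp only [map_sum, lTensor_tmul, map_tmul, mulRight_apply] at hcoassoc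
  simp only [AlgebraTensorModule.curry_apply, restrictScalars_self, curry_apply, coe_comp,
    Function.comp_apply, mul_apply_apply, map_sum, map23_comulAct_tmul _ _ 𝓢,
    map13_comulAct_tmul _ 𝓡, map12_comulAct_tmul _ (ℛ K (𝓡.left _)), map12_comulAct_tmul _ 𝓡,
    map23_comulAct_tmul _ _ ((ℛ K (𝓡.right _)).mul 𝓢), Repr.mul_index, Repr.mul_left,
    Repr.mul_right, hcoassoc, Finset.sum_product, mul_assoc]
  rw [Finset.sum_comm]
  exact Finset.sum_congr rfl fun _ _ ↦ Finset.sum_comm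

open Coalgebra HopfAlgebra WithConv in
noncomputable def AlgHom.convUnit {R A B : Type*} [CommSemiring R] [Semiring A]
    [HopfAlgebra R A] [Semiring B] [Algebra R B] (φ : A →ₐ[R] B) : (WithConv (A →ₗ[R] B))ˣ where
  val := toConv φ.toLinearMap
  inv := toConv (φ.toLinearMap ∘ₗ antipode R)
  val_inv := by
    ext a
    simp [(ℛ R a).convMul_apply, ← map_mul, ← map_sum, sum_mul_antipode_eq_algebraMap_counit]
  inv_val := by
    ext a
    simp [(ℛ R a).convMul_apply, ← map_mul, ← map_sum, sum_antipode_mul_eq_algebraMap_counit]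

lemma antipodeMap_eq_comulAct :
    antipodeMap k H = comulAct (LinearMap.mul k H ∘ₗ HopfAlgebra.antipode k) := by
  rw [antipodeMap, comulAct]
  congr 2
  exact TensorProduct.ext' fun _ _ ↦ rfl

/-- for a Hopf algebra `H` with antipode `S`, the map
`R'(g ⊗ h) = Σ g₍₁₎ ⊗ S(g₍₂₎)h` is a solution of the Hopf equation. -/
theorem antipodeMap_isHopfSolution : IsHopfSolution (antipodeMap k H) := by
  have hW : antipodeMap k H = ↑(Units.map comulActHom (Algebra.lmul k H).convUnit)⁻¹ := by
    rw [antipodeMap_eq_comulAct]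
    rfl
  rw [hW]
  exact isPentagonSolution_comulAct_mul.isHopfSolution_inv
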